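/- arXiv:1505.03445 — 2 statements merged into one kernel-verified Lean document; each statement's English description precedes it below -/
import Mathlib

section
/- Let Σ be an n×n signature matrix with finite value Val(Σ), and c, d valid offsets satisfying Val(Σ) = Σ_j d_j − Σ_i c_i and Σ_{ij} ≤ d_j − c_i for all i,j. Fix a row index l, and let Σ̄ agree with Σ on all rows i ≠ l, while Σ̄_{lj} < d_j − c_l for all j. Then Val(Σ̄) < Val(Σ). -/
/-- The value of a signature matrix: the maximum over all transversals
(permutations) of the sum of the entries on the transversal. -/
noncomputable def sigVal {n : ℕ} (S : Matrix (Fin n) (Fin n) (WithBot ℤ)) : WithBot ℤ :=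
  Finset.univ.sup' Finset.univ_nonempty (fun σ : Equiv.Perm (Fin n) => ∑ i, S i (σ i))

/-!
Every transversal σ of `Sb` is bounded entrywise by the offsets, `Sb i (σ i) ≤ d (σ i) - c i`,
strictly in row `l`; summing, its value is below `∑ i, (d (σ i) - c i) = ∑ d - ∑ c = sigVal S`.
-/

theorem WithBot.sum_lt_coe_sum {ι M : Type*} [AddCommMonoid M] [PartialOrder M]
    [IsOrderedCancelAddMonoid M] {s : Finset ι} {f : ι → WithBot M} {g : ι → M}
    (hle : ∀ i ∈ s, f i ≤ g i) (hlt : ∃ i ∈ s, f i < g i) :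
    ∑ i ∈ s, f i < ↑(∑ i ∈ s, g i) := by
  classical
  obtain ⟨l, hl, hflt⟩ := hlt
  rw [← Finset.add_sum_erase s f hl, ← Finset.add_sum_erase s g hl, WithBot.coe_add]
  calc f l + ∑ i ∈ s.erase l, f i ≤ f l + ↑(∑ i ∈ s.erase l, g i) := by
        rw [WithBot.coe_sum]
        gcongr with i hi
        exact hle i (Finset.mem_of_mem_erase hi)
    _ < _ := WithBot.add_lt_add_right WithBot.coe_ne_bot hflt

theorem stmt1 {n : ℕ} (S Sb : Matrix (Fin n) (Fin n) (WithBot ℤ)) (c d : Fin n → ℤ)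
    (l : Fin n)
    (hvalid : ∀ i j, S i j ≤ ((d j - c i : ℤ) : WithBot ℤ))
    (hfin : sigVal S = (((∑ j, d j) - ∑ i, c i : ℤ) : WithBot ℤ))
    (hrow : ∀ i, i ≠ l → ∀ j, Sb i j = S i j)
    (hl : ∀ j, Sb l j < ((d j - c l : ℤ) : WithBot ℤ)) :
    sigVal Sb < sigVal S := by
  rw [sigVal, Finset.sup'_lt_iff]
  intro σ _
  rw [hfin, ← Equiv.sum_comp σ d, ← Finset.sum_sub_distrib]
  refine WithBot.sum_lt_coe_sum (fun i _ => ?_) ⟨l, Finset.mem_univ l, hl (σ l)⟩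
  by_cases hi : i = l
  · subst hi
    exact (hl (σ i)).le
  · rw [hrow i hi]
    exact hvalid i (σ i)
end

section
/- (Griewank's Lemma, iterated form) Let v : ℝ → ℝ be given as v(t) = V(t, x(t), x'(t), …, x^{(q)}(t)) where V : ℝ × ℝ^{q+1} → ℝ is smooth and x : ℝ → ℝ is smooth. Define the total derivative v' and more generally v^{(p)}. Then the partial derivative of v with respect to the highest-order derivative x^{(q)} (i.e., ∂V/∂(last argument) evaluated along the trajectory) equals the partial derivative of v^{(p)} with respect to x^{(q+p)} for every p ≥ 1. -/
/-- Partial derivative of `V : ℝ → (Fin m → ℝ) → ℝ` with respect to its `k`-th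
formal argument, evaluated at `(t, y)`. -/
noncomputable def pd {m : ℕ} (V : ℝ → (Fin m → ℝ) → ℝ) (k : Fin m) (t : ℝ)
    (y : Fin m → ℝ) : ℝ :=
  deriv (fun z => V t (Function.update y k z)) (y k)

/-- Total derivative with respect to `t` of an expression `V(t, x, x', …, x^{(m-1)})`,
computed by the chain rule: the result is an expression in `t` and derivatives of `x`
up to order `m` (the `k`-th argument stands for `x^{(k)}`). -/
noncomputable def totalDeriv {m : ℕ} (V : ℝ → (Fin m → ℝ) → ℝ) :
    ℝ → (Fin (m + 1) → ℝ) → ℝ :=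
  fun t y =>
    deriv (fun s => V s (fun k => y k.castSucc)) t
      + ∑ k : Fin m, pd V k t (fun j => y j.castSucc) * y k.succ

/-- `p`-fold iterated total derivative. -/
noncomputable def totalDerivIter : (p : ℕ) → {m : ℕ} → (ℝ → (Fin m → ℝ) → ℝ) →
    ℝ → (Fin (m + p) → ℝ) → ℝ
  | 0, _, V => V
  | p + 1, m, V => fun t y =>
      totalDerivIter p (totalDeriv V) t (fun k => y (Fin.cast (by omega) k))

/-- Key computation: `totalDeriv V` depends affinely on the new highest-order
variable, with coefficient `pd V (Fin.last m)`. No smoothness is needed. -/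
lemma pd_totalDeriv {m : ℕ} (V : ℝ → (Fin (m + 1) → ℝ) → ℝ) (t : ℝ)
    (y : Fin (m + 2) → ℝ) :
    pd (totalDeriv V) (Fin.last (m + 1)) t y
      = pd V (Fin.last m) t (fun k => y k.castSucc) := by
  set yh : Fin (m + 1) → ℝ := fun k => y k.castSucc with hy
  have key : ∀ z : ℝ, totalDeriv V t (Function.update y (Fin.last (m + 1)) z)
      = (deriv (fun s => V s yh) t
          + ∑ k ∈ Finset.univ.erase (Fin.last m), pd V k t yh * y k.succ)
        + pd V (Fin.last m) t yh * z := by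
    intro z
    have hupd : (fun k : Fin (m + 1) =>
        Function.update y (Fin.last (m + 1)) z k.castSucc) = yh := by
      funext k
      exact Function.update_of_ne (Fin.castSucc_lt_last k).ne _ _
    simp only [totalDeriv, hupd]
    rw [← Finset.add_sum_erase _ _ (Finset.mem_univ (Fin.last m))]
    have h1 : Function.update y (Fin.last (m + 1)) z (Fin.last m).succ = z := by
      rw [Fin.succ_last]; exact Function.update_self _ _ _
    have h2 : ∀ k ∈ Finset.univ.erase (Fin.last m),
        pd V k t yh * Function.update y (Fin.last (m + 1)) z k.succ
          = pd V k t yh * y k.succ := by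
      intro k hk
      have hk' : k ≠ Fin.last m := Finset.ne_of_mem_erase hk
      rw [Function.update_of_ne]
      intro h
      exact hk' (by simpa [← Fin.succ_last, Fin.succ_inj] using h)
    rw [h1, Finset.sum_congr rfl h2]
    ring
  rw [pd]
  simp only [key]
  have hd : HasDerivAt (fun z : ℝ =>
      (deriv (fun s => V s yh) t
          + ∑ k ∈ Finset.univ.erase (Fin.last m), pd V k t yh * y k.succ)
        + pd V (Fin.last m) t yh * z)
      (pd V (Fin.last m) t yh) (y (Fin.last (m + 1))) := by
    simpa using ((hasDerivAt_id (y (Fin.last (m + 1)))).const_mul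
      (pd V (Fin.last m) t yh)).const_add (deriv (fun s => V s yh) t
          + ∑ k ∈ Finset.univ.erase (Fin.last m), pd V k t yh * y k.succ)
  exact hd.deriv

/-- `pd` commutes with reindexing by `Fin.cast`. -/
lemma pd_reindex {m n : ℕ} (h : n = m) (W : ℝ → (Fin n → ℝ) → ℝ) (j : Fin m)
    (t : ℝ) (y : Fin m → ℝ) :
    pd (fun t y => W t (fun k => y (Fin.cast h k))) j t y
      = pd W (Fin.cast h.symm j) t (fun k => y (Fin.cast h k)) := by
  subst h
  rfl

/-- Griewank's Lemma (iterated form): if `v = V(t, x, x', …, x^{(q)})` with `V` smooth,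
then `∂v/∂x^{(q)} = ∂v^{(p)}/∂x^{(q+p)}` for all `p`, as functions of the formal
arguments (the arguments of `v` being the restriction of those of `v^{(p)}`). -/
theorem stmt3 {q : ℕ} (V : ℝ → (Fin (q + 1) → ℝ) → ℝ)
    (hV : ContDiff ℝ (⊤ : ℕ∞) (fun p : ℝ × (Fin (q + 1) → ℝ) => V p.1 p.2))
    (p : ℕ) (t : ℝ) (y : Fin (q + 1 + p) → ℝ) :
    pd (totalDerivIter p V) ⟨q + p, by omega⟩ t y
      = pd V (Fin.last q) t (fun k => y (Fin.castLE (by omega) k)) := by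
  clear hV
  induction p generalizing q V with
  | zero =>
      have h0 : (⟨q + 0, by omega⟩ : Fin (q + 1 + 0)) = Fin.last q := rfl
      simp only [totalDerivIter, h0]
      congr 1
  | succ p ih =>
      have hc : (q + 1) + 1 + p = q + 1 + (p + 1) := by omega
      show pd (fun t y => totalDerivIter p (totalDeriv V) t
          (fun k => y (Fin.cast hc k))) ⟨q + (p + 1), by omega⟩ t y
        = pd V (Fin.last q) t (fun k => y (Fin.castLE (by omega) k))
      rw [pd_reindex hc]
      have hidx : Fin.cast hc.symm (⟨q + (p + 1), by omega⟩ : Fin (q + 1 + (p + 1)))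
          = (⟨(q + 1) + p, by omega⟩ : Fin ((q + 1) + 1 + p)) := Fin.ext (by simp; omega)
      rw [hidx, ih]
      rw [pd_totalDeriv]
      congr 1
end
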